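/- Let M be a Kripke model and S a relation on its worlds satisfying (Sim_k) and the condition (Sim●⌢): if S w v and w R s, then either S s w, or both S v w and there exists t with v R t and S s t. Then for every formula φ of the language with ⊤, ⊥, ∧, ∨ and the undeterminedness operator ●⌢ (where w ⊩ ●⌢φ iff w ⊮ φ and some R-successor of w satisfies φ), S w v and w ⊩ φ imply v ⊩ φ. -/
import Mathlib

inductive Fm (K : Type) : Type
  | prop (k : K)
  | top
  | bot
  | and (a b : Fm K)
  | or (a b : Fm K)
  | undet (a : Fm K)

def Sat {W K : Type} (R : W → W → Prop) (P : K → W → Prop) : W → Fm K → Prop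
  | w, .prop k => P k w
  | _, .top => True
  | _, .bot => False
  | w, .and a b => Sat R P w a ∧ Sat R P w b
  | w, .or a b => Sat R P w a ∨ Sat R P w b
  | w, .undet a => ¬ Sat R P w a ∧ ∃ v, R w v ∧ Sat R P v a

theorem stmt6 {W K : Type} (R : W → W → Prop) (P : K → W → Prop)
    (S : W → W → Prop)
    (hP : ∀ k w v, S w v → P k w → P k v)
    (hOp : ∀ w v s, S w v → R w s → (S s w ∨ (S v w ∧ ∃ t, R v t ∧ S s t))) :
    ∀ (φ : Fm K) (w v : W), S w v → Sat R P w φ → Sat R P v φ := by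
  intro φ
  induction φ with
  | prop k => intro w v h hw; exact hP k w v h hw
  | top => intro _ _ _ _; trivial
  | bot => intro _ _ _ hw; exact hw
  | and a b iha ihb => intro w v h hw; exact ⟨iha w v h hw.1, ihb w v h hw.2⟩
  | or a b iha ihb =>
    intro w v h hw
    rcases hw with hw | hw
    · exact Or.inl (iha w v h hw)
    · exact Or.inr (ihb w v h hw)
  | undet a ih =>
    intro w v h hw
    obtain ⟨hna, s, hws, hsa⟩ := hw
    rcases hOp w v s h hws with hsw | ⟨hvw, t, hvt, hst⟩
    · exact absurd (ih s w hsw hsa) hna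
    · exact ⟨fun hva => hna (ih v w hvw hva), t, hvt, ih s t hst hsa⟩
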